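/- Non-decrease of polynomial decay under convolution restricted to a cone: Let a, b : ℤ^d → ℂ, let Γ, Γ₁ be open cones with cl(Γ₁) ⊂ Γ ∪ {0}, and 0 < c < 1 with {y : ∃ξ∈Γ₁, |ξ−y| ≤ c|ξ|} ⊆ Γ. Suppose (1) for every N there is C_N with |a_j| ≤ C_N⟨j⟩^{−N} for j ∈ Γ ∩ ℤ^d, (2) there are D, M with |a_j| ≤ D⟨j⟩^M for all j, and (3) for every N, K_N := Σ_j ⟨j⟩^{M+N}|b_j| < ∞. Then for every N there is C′_N such that |Σ_j a_{n−j} b_j| ≤ C′_N ⟨n⟩^{−N} for all n ∈ Γ₁ ∩ ℤ^d; one may take C′_N = C_N(1−c)^{−N}Σ_j⟨j⟩^N|b_j| + D c^{−N}(1+c^{−1})^M K_N. -/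

import Mathlib

/-!
Split the sum `Σ_j a_{n-j} b_j` according to whether `|j| ≤ c|n|`. For such `j` the point
`n - j` lies in the ball of radius `c|n|` about `n`, which is inside `Γ`, and
`⟨n - j⟩ ≥ (1 - c)⟨n⟩`, so the rapid decay of `a` gives `|a_{n-j}| ≲ ⟨n⟩^{-N}`. For the other
`j` we have `⟨n - j⟩ ≤ (1 + c⁻¹)⟨j⟩` and `⟨n⟩ ≤ c⁻¹⟨j⟩`, so the polynomial bound on `a` gives
`|a_{n-j}| ≲ ⟨j⟩^{M+N} ⟨n⟩^{-N}`, and the weight `⟨j⟩^{M+N}` is absorbed by `b`.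
-/

/-- The Japanese bracket `⟨x⟩ = (1+|x|²)^{1/2}` on `ℝ^d`. -/
noncomputable def jb {d : ℕ} (x : EuclideanSpace ℝ (Fin d)) : ℝ := Real.sqrt (1 + ‖x‖ ^ 2)

/-- The embedding of the lattice `ℤ^d` into `ℝ^d`. -/
noncomputable def latt {d : ℕ} (n : Fin d → ℤ) : EuclideanSpace ℝ (Fin d) :=
  WithLp.toLp 2 (fun i => (n i : ℝ))

/-- A cone in `ℝ^d`: a set closed under multiplication by positive scalars. -/
def IsCone {d : ℕ} (Γ : Set (EuclideanSpace ℝ (Fin d))) : Prop :=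
  ∀ x ∈ Γ, ∀ t : ℝ, 0 < t → t • x ∈ Γ

open Metric

lemma latt_sub {d : ℕ} (n j : Fin d → ℤ) : latt (n - j) = latt n - latt j := by
  ext i
  simp [latt]

section JapaneseBracket

variable {d : ℕ} {x y : EuclideanSpace ℝ (Fin d)} {t c : ℝ}

lemma one_le_jb (x : EuclideanSpace ℝ (Fin d)) : 1 ≤ jb x :=
  Real.one_le_sqrt.2 (le_add_of_nonneg_right (sq_nonneg _))

lemma jb_pos (x : EuclideanSpace ℝ (Fin d)) : 0 < jb x :=
  zero_lt_one.trans_le (one_le_jb x)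

lemma mul_jb_eq_sqrt (ht : 0 ≤ t) (x : EuclideanSpace ℝ (Fin d)) :
    t * jb x = Real.sqrt (t ^ 2 * (1 + ‖x‖ ^ 2)) := by
  rw [Real.sqrt_mul (sq_nonneg t), Real.sqrt_sq ht, jb]

lemma mul_jb_le_jb_of_mul_norm_le (ht0 : 0 ≤ t) (ht1 : t ≤ 1) (h : t * ‖y‖ ≤ ‖x‖) :
    t * jb y ≤ jb x := by
  rw [mul_jb_eq_sqrt ht0, jb]
  refine Real.sqrt_le_sqrt ?_
  nlinarith [mul_le_mul h h (by positivity) (norm_nonneg x), norm_nonneg y]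

lemma jb_le_mul_jb_of_norm_le_mul (ht : 1 ≤ t) (h : ‖x‖ ≤ t * ‖y‖) : jb x ≤ t * jb y := by
  rw [mul_jb_eq_sqrt (zero_le_one.trans ht), jb]
  refine Real.sqrt_le_sqrt ?_
  nlinarith [mul_le_mul h h (norm_nonneg x) (by positivity), norm_nonneg y]

lemma rpow_neg_jb_sub_le {s : ℝ} (hc0 : 0 ≤ c) (hc1 : c < 1) (hs : 0 ≤ s)
    (h : ‖y‖ ≤ c * ‖x‖) : jb (x - y) ^ (-s) ≤ (1 - c) ^ (-s) * jb x ^ (-s) := by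
  have hlow : (1 - c) * jb x ≤ jb (x - y) := by
    refine mul_jb_le_jb_of_mul_norm_le (by linarith) (by linarith) ?_
    linarith [norm_sub_norm_le x y]
  rw [← Real.mul_rpow (by linarith) (jb_pos x).le]
  exact Real.rpow_le_rpow_of_nonpos (mul_pos (by linarith) (jb_pos x)) hlow (by linarith)

lemma rpow_jb_sub_le {M s : ℝ} (hc0 : 0 < c) (hc1 : c ≤ 1) (hM : 0 ≤ M) (hs : 0 ≤ s)
    (h : c * ‖x‖ ≤ ‖y‖) :
    jb (x - y) ^ M ≤ c ^ (-s) * (1 + c⁻¹) ^ M * jb y ^ (M + s) * jb x ^ (-s) := by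
  have hc_inv : 1 ≤ 1 + c⁻¹ := le_add_of_nonneg_right (inv_nonneg.2 hc0.le)
  have hup : jb (x - y) ≤ (1 + c⁻¹) * jb y := by
    refine jb_le_mul_jb_of_norm_le_mul hc_inv ?_
    have : ‖x‖ ≤ c⁻¹ * ‖y‖ := by rwa [le_inv_mul_iff₀ hc0]
    nlinarith [norm_sub_le x y]
  have hx : c * jb x ≤ jb y := mul_jb_le_jb_of_mul_norm_le hc0.le hc1 h
  have hxs : c ^ s * jb x ^ s ≤ jb y ^ s := by
    rw [← Real.mul_rpow hc0.le (jb_pos x).le]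
    exact Real.rpow_le_rpow (by positivity [jb_pos x]) hx hs
  have hone : 1 ≤ c ^ (-s) * jb y ^ s * jb x ^ (-s) := by
    have hjx := jb_pos x
    rw [Real.rpow_neg hc0.le, Real.rpow_neg hjx.le, ← div_eq_inv_mul, div_mul_eq_mul_div,
      ← div_eq_mul_inv, div_div, one_le_div (by positivity)]
    linarith
  calc jb (x - y) ^ M ≤ ((1 + c⁻¹) * jb y) ^ M :=
        Real.rpow_le_rpow (jb_pos _).le hup hM
    _ ≤ ((1 + c⁻¹) * jb y) ^ M * (c ^ (-s) * jb y ^ s * jb x ^ (-s)) :=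
        le_mul_of_one_le_right (by positivity [jb_pos y]) hone
    _ = c ^ (-s) * (1 + c⁻¹) ^ M * jb y ^ (M + s) * jb x ^ (-s) := by
        rw [Real.mul_rpow (by linarith) (jb_pos y).le, Real.rpow_add (jb_pos y)]
        ring

end JapaneseBracket

lemma norm_apply_sub_le_of_closedBall_subset {d : ℕ} {E : Type*} [SeminormedAddGroup E]
    {a : (Fin d → ℤ) → E} {Γ : Set (EuclideanSpace ℝ (Fin d))} {n : Fin d → ℤ} {c C D M s : ℝ}
    (hc0 : 0 < c) (hc1 : c < 1) (hM : 0 ≤ M) (hs : 0 ≤ s)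
    (hball : closedBall (latt n) (c * ‖latt n‖) ⊆ Γ)
    (ha : ∀ j, latt j ∈ Γ → ‖a j‖ ≤ C * jb (latt j) ^ (-s))
    (hapoly : ∀ j, ‖a j‖ ≤ D * jb (latt j) ^ M) (j : Fin d → ℤ) :
    ‖a (n - j)‖ ≤ (C * (1 - c) ^ (-s) * jb (latt j) ^ s
      + D * c ^ (-s) * (1 + c⁻¹) ^ M * jb (latt j) ^ (M + s)) * jb (latt n) ^ (-s) := by
  have hn : latt n ∈ Γ := hball (mem_closedBall_self (by positivity))
  have hC : 0 ≤ C := nonneg_of_mul_nonneg_left ((norm_nonneg _).trans (ha n hn))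
    (Real.rpow_pos_of_pos (jb_pos _) _)
  have hD : 0 ≤ D := nonneg_of_mul_nonneg_left ((norm_nonneg _).trans (hapoly n))
    (Real.rpow_pos_of_pos (jb_pos _) _)
  have hjn := jb_pos (latt n)
  have hjj := jb_pos (latt j)
  by_cases hj : ‖latt j‖ ≤ c * ‖latt n‖
  · have hmem : latt (n - j) ∈ Γ := hball <| by
      rwa [mem_closedBall', dist_eq_norm, latt_sub, sub_sub_cancel]
    calc ‖a (n - j)‖ ≤ C * jb (latt (n - j)) ^ (-s) := ha _ hmem
      _ ≤ C * ((1 - c) ^ (-s) * jb (latt n) ^ (-s)) := by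
          rw [latt_sub]
          exact mul_le_mul_of_nonneg_left (rpow_neg_jb_sub_le hc0.le hc1 hs hj) hC
      _ = C * (1 - c) ^ (-s) * 1 * jb (latt n) ^ (-s) := by ring
      _ ≤ C * (1 - c) ^ (-s) * jb (latt j) ^ s * jb (latt n) ^ (-s) := by
          have : 0 < 1 - c := by linarith
          gcongr
          exact Real.one_le_rpow (one_le_jb _) hs
      _ ≤ _ := by
          rw [add_mul]
          exact le_add_of_nonneg_right (by positivity)
  · push Not at hj
    calc ‖a (n - j)‖ ≤ D * jb (latt (n - j)) ^ M := hapoly _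
      _ ≤ D * (c ^ (-s) * (1 + c⁻¹) ^ M * jb (latt j) ^ (M + s) * jb (latt n) ^ (-s)) := by
          rw [latt_sub]
          exact mul_le_mul_of_nonneg_left (rpow_jb_sub_le hc0 hc1.le hM hs hj.le) hD
      _ ≤ _ := by
          have : 0 ≤ 1 - c := by linarith
          rw [add_mul, ← mul_assoc, ← mul_assoc, ← mul_assoc]
          exact le_add_of_nonneg_left (by positivity)

theorem stmt12_general {d : ℕ} (a b : (Fin d → ℤ) → ℂ)
    (Γ Γ₁ : Set (EuclideanSpace ℝ (Fin d)))
    (c : ℝ) (hc0 : 0 < c) (hc1 : c < 1)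
    (hnbhd : ∀ y : EuclideanSpace ℝ (Fin d), (∃ ξ ∈ Γ₁, ‖ξ - y‖ ≤ c * ‖ξ‖) → y ∈ Γ)
    (C : ℕ → ℝ)
    (ha : ∀ N : ℕ, ∀ j : Fin d → ℤ, latt j ∈ Γ → ‖a j‖ ≤ C N * jb (latt j) ^ (-(N : ℝ)))
    (D M : ℝ) (hM : 0 < M)
    (hapoly : ∀ j : Fin d → ℤ, ‖a j‖ ≤ D * jb (latt j) ^ M)
    (hb : ∀ N : ℕ, Summable (fun j : Fin d → ℤ => jb (latt j) ^ (M + (N : ℝ)) * ‖b j‖)) :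
    ∀ N : ℕ, ∀ n : Fin d → ℤ, latt n ∈ Γ₁ →
      ‖∑' j : Fin d → ℤ, a (n - j) * b j‖
        ≤ (C N * (1 - c) ^ (-(N : ℝ)) * (∑' j : Fin d → ℤ, jb (latt j) ^ (N : ℝ) * ‖b j‖)
            + D * c ^ (-(N : ℝ)) * (1 + c⁻¹) ^ M
              * (∑' j : Fin d → ℤ, jb (latt j) ^ (M + (N : ℝ)) * ‖b j‖))
          * jb (latt n) ^ (-(N : ℝ)) := by
  intro N n hn
  have hball : closedBall (latt n) (c * ‖latt n‖) ⊆ Γ := fun y hy =>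
    hnbhd y ⟨latt n, hn, by rwa [mem_closedBall', dist_eq_norm] at hy⟩
  have hbN : Summable (fun j : Fin d → ℤ => jb (latt j) ^ (N : ℝ) * ‖b j‖) :=
    (hb N).of_nonneg_of_le (fun j => by positivity [jb_pos (latt j)]) fun j =>
      mul_le_mul_of_nonneg_right
        (Real.rpow_le_rpow_of_exponent_le (one_le_jb _) (by linarith)) (norm_nonneg _)
  refine tsum_of_norm_bounded
    (((hbN.hasSum.mul_left _).add ((hb N).hasSum.mul_left _)).mul_right _) fun j => ?_
  rw [norm_mul]
  calc ‖a (n - j)‖ * ‖b j‖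
      ≤ (C N * (1 - c) ^ (-(N : ℝ)) * jb (latt j) ^ (N : ℝ)
          + D * c ^ (-(N : ℝ)) * (1 + c⁻¹) ^ M * jb (latt j) ^ (M + (N : ℝ)))
          * jb (latt n) ^ (-(N : ℝ)) * ‖b j‖ :=
        mul_le_mul_of_nonneg_right
          (norm_apply_sub_le_of_closedBall_subset hc0 hc1 hM.le (Nat.cast_nonneg N) hball (ha N)
            hapoly j)
          (norm_nonneg _)
    _ = _ := by ring

/-- Core estimate in the discrete wave front characterization: rapid decay of `a` on
`Γ ∩ ℤ^d`, a global polynomial bound on `a`, and rapid weighted summability of `b` yield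
rapid decay of the convolution `n ↦ Σ_j a_{n-j} b_j` on `Γ₁ ∩ ℤ^d`, with explicit constant
`C'_N = C_N (1-c)^{-N} Σ_j ⟨j⟩^N |b_j| + D c^{-N} (1+c⁻¹)^M Σ_j ⟨j⟩^{M+N} |b_j|`. -/
theorem stmt12 {d : ℕ} (a b : (Fin d → ℤ) → ℂ)
    (Γ Γ₁ : Set (EuclideanSpace ℝ (Fin d)))
    (hΓopen : IsOpen Γ) (hΓ₁open : IsOpen Γ₁)
    (hΓcone : IsCone Γ) (hΓ₁cone : IsCone Γ₁)
    (hcl : closure Γ₁ ⊆ Γ ∪ {0})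
    (c : ℝ) (hc0 : 0 < c) (hc1 : c < 1)
    (hnbhd : ∀ y : EuclideanSpace ℝ (Fin d), (∃ ξ ∈ Γ₁, ‖ξ - y‖ ≤ c * ‖ξ‖) → y ∈ Γ)
    (C : ℕ → ℝ)
    (ha : ∀ N : ℕ, ∀ j : Fin d → ℤ, latt j ∈ Γ → ‖a j‖ ≤ C N * jb (latt j) ^ (-(N : ℝ)))
    (D M : ℝ) (hD : 0 < D) (hM : 0 < M)
    (hapoly : ∀ j : Fin d → ℤ, ‖a j‖ ≤ D * jb (latt j) ^ M)
    (hb : ∀ N : ℕ, Summable (fun j : Fin d → ℤ => jb (latt j) ^ (M + (N : ℝ)) * ‖b j‖)) :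
    ∀ N : ℕ, ∀ n : Fin d → ℤ, latt n ∈ Γ₁ →
      ‖∑' j : Fin d → ℤ, a (n - j) * b j‖
        ≤ (C N * (1 - c) ^ (-(N : ℝ)) * (∑' j : Fin d → ℤ, jb (latt j) ^ (N : ℝ) * ‖b j‖)
            + D * c ^ (-(N : ℝ)) * (1 + c⁻¹) ^ M
              * (∑' j : Fin d → ℤ, jb (latt j) ^ (M + (N : ℝ)) * ‖b j‖))
          * jb (latt n) ^ (-(N : ℝ)) :=
  stmt12_general a b Γ Γ₁ c hc0 hc1 hnbhd C ha D M hM hapoly hb
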